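/- As x → -∞, the McN hazard rate satisfies h(x) ~ (c/(σ B(a,b))) (-(x-μ)/σ)^{1-ac} φ((x-μ)/σ)^{ac}, i.e., the ratio of the two sides tends to 1. -/

import Mathlib

open Real MeasureTheory Filter Topology

noncomputable def betaFn (a b : ℝ) : ℝ := ∫ t in (0:ℝ)..1, t ^ (a-1) * (1-t) ^ (b-1)

noncomputable def gaussPdf (x : ℝ) : ℝ := (Real.sqrt (2 * Real.pi))⁻¹ * Real.exp (-x^2/2)

noncomputable def stdNormCdf (x : ℝ) : ℝ := ∫ t in Set.Iic x, gaussPdf t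

noncomputable def mcNPdf (a b c μ σ x : ℝ) : ℝ :=
  (c / (betaFn a b * σ)) * gaussPdf ((x - μ)/σ)
    * stdNormCdf ((x - μ)/σ) ^ (a*c - 1)
    * (1 - stdNormCdf ((x - μ)/σ) ^ c) ^ (b - 1)

noncomputable def mcNCdf (a b c μ σ x : ℝ) : ℝ :=
  (1 / betaFn a b) * ∫ t in (0:ℝ)..(stdNormCdf ((x - μ)/σ) ^ c), t ^ (a-1) * (1-t) ^ (b-1)

noncomputable def mcNHazard (a b c μ σ x : ℝ) : ℝ :=
  mcNPdf a b c μ σ x / (1 - mcNCdf a b c μ σ x)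

/-!
With `z = (x - μ) / σ → -∞`, the density factors as
`h(x) · (1 - F(x)) = (c / (σ B(a,b))) (-z)^{1-ac} φ(z)^{ac} · R(z)^{ac-1} (1 - Φ(z)^c)^{b-1}`,
where `R(z) = Φ(z) (-z) / φ(z)` is Mills' ratio. So the quotient in question is
`R(z)^{ac-1} (1 - Φ(z)^c)^{b-1} / (1 - F(x))`, and each factor tends to `1`: `R(z) → 1` by
l'Hôpital's rule, `Φ(z) → 0`, and `F(x) → 0` because the incomplete Beta integral is continuous in
its upper limit.
-/
open Set

lemma gaussPdf_pos (x : ℝ) : 0 < gaussPdf x := by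
  unfold gaussPdf
  positivity

lemma continuous_gaussPdf : Continuous gaussPdf := by
  unfold gaussPdf
  fun_prop

lemma integrable_gaussPdf : Integrable gaussPdf := by
  refine ((integrable_exp_neg_mul_sq (b := 1/2) (by norm_num)).const_mul
    (Real.sqrt (2 * π))⁻¹).congr (ae_of_all _ fun x => ?_)
  simp only [gaussPdf]
  ring_nf

lemma hasDerivAt_gaussPdf (x : ℝ) : HasDerivAt gaussPdf (-x * gaussPdf x) x := by
  have h : HasDerivAt (fun x : ℝ => -x ^ 2 / 2) (-x) x := by
    simpa using ((hasDerivAt_pow 2 x).neg.div_const 2).congr_deriv (by norm_num; ring)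
  refine (h.exp.const_mul (Real.sqrt (2 * π))⁻¹).congr_deriv ?_
  simp only [gaussPdf]
  ring

lemma hasDerivAt_stdNormCdf (x : ℝ) : HasDerivAt stdNormCdf (gaussPdf x) x := by
  have hsplit : (fun y => stdNormCdf 0 + ∫ t in (0:ℝ)..y, gaussPdf t) = stdNormCdf := by
    ext y
    rw [← intervalIntegral.integral_Iic_sub_Iic integrable_gaussPdf.integrableOn
      integrable_gaussPdf.integrableOn, stdNormCdf, stdNormCdf, add_sub_cancel]
  rw [← hsplit]
  exact (intervalIntegral.integral_hasDerivAt_right (continuous_gaussPdf.intervalIntegrable _ _)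
    (continuous_gaussPdf.stronglyMeasurableAtFilter _ _) continuous_gaussPdf.continuousAt).const_add _

lemma stdNormCdf_nonneg (x : ℝ) : 0 ≤ stdNormCdf x :=
  setIntegral_nonneg measurableSet_Iic fun t _ => (gaussPdf_pos t).le

lemma tendsto_stdNormCdf_atBot : Tendsto stdNormCdf atBot (𝓝 0) :=
  tendsto_integral_Iic_zero tendsto_id

lemma tendsto_sq_atBot : Tendsto (fun x : ℝ => x ^ 2) atBot atTop :=
  ((tendsto_pow_atTop two_ne_zero).comp tendsto_neg_atBot_atTop).congr fun x => neg_sq x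

lemma tendsto_gaussPdf_atBot : Tendsto gaussPdf atBot (𝓝 0) := by
  have h : Tendsto (fun x : ℝ => -x ^ 2 / 2) atBot atBot :=
    (tendsto_neg_atTop_atBot.comp tendsto_sq_atBot).atBot_div_const two_pos
  have := (tendsto_exp_atBot.comp h).const_mul (Real.sqrt (2 * π))⁻¹
  rw [mul_zero] at this
  exact this

/-- Mills' ratio, by l'Hôpital's rule: `Φ` and `φ(x) / (-x)` both vanish at `-∞`, and the ratio
of their derivatives is `1 / (1 + x⁻²)`. -/
lemma tendsto_stdNormCdf_mul_neg_div_gaussPdf_atBot :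
    Tendsto (fun x => stdNormCdf x * (-x) / gaussPdf x) atBot (𝓝 1) := by
  have hg : ∀ x < 0, HasDerivAt (fun y => gaussPdf y * (-y)⁻¹)
      (gaussPdf x * (1 + (x ^ 2)⁻¹)) x := by
    intro x hx
    have hneg : HasDerivAt (fun y : ℝ => -y) (-1) x := hasDerivAt_neg x
    refine ((hasDerivAt_gaussPdf x).mul (hneg.inv (neg_ne_zero.2 hx.ne))).congr_deriv ?_
    have hx0 : x ≠ 0 := hx.ne
    simp only [Pi.inv_apply]
    field_simp
  have hg0 : Tendsto (fun x => gaussPdf x * (-x)⁻¹) atBot (𝓝 0) := by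
    simpa using tendsto_gaussPdf_atBot.mul (tendsto_inv_atTop_zero.comp tendsto_neg_atBot_atTop)
  have hratio : Tendsto (fun x => gaussPdf x / (gaussPdf x * (1 + (x ^ 2)⁻¹))) atBot (𝓝 1) := by
    have h := ((tendsto_inv_atTop_zero.comp tendsto_sq_atBot).const_add
      (1 : ℝ)).inv₀ (by norm_num)
    simp only [add_zero, inv_one] at h
    refine h.congr fun x => ?_
    rw [div_mul_cancel_left₀ (gaussPdf_pos x).ne']
    rfl
  refine (HasDerivAt.lhopital_zero_atBot (Eventually.of_forall hasDerivAt_stdNormCdf)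
    ((eventually_lt_atBot 0).mono hg) (Eventually.of_forall fun x => by
      have := gaussPdf_pos x; positivity) tendsto_stdNormCdf_atBot hg0 hratio).congr' ?_
  filter_upwards [eventually_lt_atBot 0] with x hx
  have := gaussPdf_pos x
  field_simp

/-- The integrand is the norm of the complex Beta integrand, whose convergence is in Mathlib. -/
lemma intervalIntegrable_betaIntegrand {a b : ℝ} (ha : 0 < a) (hb : 0 < b) :
    IntervalIntegrable (fun t : ℝ => t ^ (a - 1) * (1 - t) ^ (b - 1)) volume 0 1 := by
  refine (Complex.betaIntegral_convergent (u := a) (v := b) (by simpa) (by simpa)).norm.congr_uIoo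
    fun t ht => ?_
  rw [uIoo_of_le zero_le_one] at ht
  obtain ⟨h0, h1⟩ : 0 < t ∧ 0 < 1 - t := ⟨ht.1, sub_pos.2 ht.2⟩
  have hcast : (t : ℂ) ^ ((a : ℂ) - 1) * (1 - (t : ℂ)) ^ ((b : ℂ) - 1)
      = ((t ^ (a - 1) * (1 - t) ^ (b - 1) : ℝ) : ℂ) := by
    push_cast [Complex.ofReal_cpow h0.le, Complex.ofReal_cpow h1.le]
    rfl
  simp only [hcast, Complex.norm_real]
  exact Real.norm_of_nonneg (by positivity)

lemma betaFn_pos {a b : ℝ} (ha : 0 < a) (hb : 0 < b) : 0 < betaFn a b :=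
  intervalIntegral.intervalIntegral_pos_of_pos_on (intervalIntegrable_betaIntegrand ha hb)
    (fun t ht => by have := sub_pos.2 ht.2; have := ht.1; positivity) one_pos

lemma tendsto_sub_div_atBot {μ σ : ℝ} (hσ : 0 < σ) :
    Tendsto (fun x => (x - μ) / σ) atBot atBot :=
  (tendsto_atBot_add_const_right _ (-μ) tendsto_id).atBot_div_const hσ

lemma tendsto_stdNormCdf_rpow_atBot {c μ σ : ℝ} (hc : 0 < c) (hσ : 0 < σ) :
    Tendsto (fun x => stdNormCdf ((x - μ) / σ) ^ c) atBot (𝓝 0) := by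
  simpa [Real.zero_rpow hc.ne'] using
    (tendsto_stdNormCdf_atBot.comp (tendsto_sub_div_atBot hσ)).rpow_const (Or.inr hc.le)

lemma tendsto_mcNCdf_atBot {a b c μ σ : ℝ} (ha : 0 < a) (hb : 0 < b) (hc : 0 < c) (hσ : 0 < σ) :
    Tendsto (mcNCdf a b c μ σ) atBot (𝓝 0) := by
  have hprim : ContinuousWithinAt (fun u => ∫ t in (0:ℝ)..u, t ^ (a - 1) * (1 - t) ^ (b - 1))
      (Icc 0 1) 0 := by
    rw [← uIcc_of_le zero_le_one]
    exact intervalIntegral.continuousOn_primitive_interval' (intervalIntegrable_betaIntegrand ha hb)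
      left_mem_uIcc _ left_mem_uIcc
  have hu := tendsto_stdNormCdf_rpow_atBot (μ := μ) hc hσ
  have hu' : Tendsto (fun x => stdNormCdf ((x - μ) / σ) ^ c) atBot (𝓝[Icc 0 1] 0) :=
    tendsto_nhdsWithin_iff.2 ⟨hu, by
      filter_upwards [hu.eventually_le_const zero_lt_one] with x hx
      exact ⟨Real.rpow_nonneg (stdNormCdf_nonneg _) _, hx⟩⟩
  have := (hprim.tendsto.comp hu').const_mul (1 / betaFn a b)
  rwa [intervalIntegral.integral_same, mul_zero] at this

lemma gaussPdf_mul_stdNormCdf_rpow_eq {z : ℝ} (hz : z < 0) (p : ℝ) :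
    gaussPdf z * stdNormCdf z ^ (p - 1)
      = (-z) ^ (1 - p) * gaussPdf z ^ p * (stdNormCdf z * (-z) / gaussPdf z) ^ (p - 1) := by
  have hφ := gaussPdf_pos z
  have hz' : 0 < -z := neg_pos.2 hz
  have hpow : gaussPdf z ^ p = gaussPdf z ^ (p - 1) * gaussPdf z := by
    rw [← rpow_add_one hφ.ne', sub_add_cancel]
  have hneg : (-z) ^ (1 - p) = ((-z) ^ (p - 1))⁻¹ := by
    rw [← rpow_neg hz'.le, neg_sub]
  rw [hpow, hneg, div_rpow (mul_nonneg (stdNormCdf_nonneg z) hz'.le) hφ.le,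
    mul_rpow (stdNormCdf_nonneg z) hz'.le]
  have := rpow_pos_of_pos hz' (p - 1)
  have := rpow_pos_of_pos hφ (p - 1)
  field_simp

/-- h(x) ~ (c/(σB(a,b))) (-(x-μ)/σ)^{1-ac} φ((x-μ)/σ)^{ac} as x → -∞. -/
theorem mcN_hazard_asymptotic_bot (a b c μ σ : ℝ)
    (ha : 0 < a) (hb : 0 < b) (hc : 0 < c) (hσ : 0 < σ) :
    Tendsto (fun x => mcNHazard a b c μ σ x
        / ((c / (σ * betaFn a b)) * (-((x - μ)/σ)) ^ (1 - a*c)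
            * gaussPdf ((x - μ)/σ) ^ (a*c)))
      atBot (𝓝 1) := by
  have hz := tendsto_sub_div_atBot (μ := μ) hσ
  have hmills := (tendsto_stdNormCdf_mul_neg_div_gaussPdf_atBot.comp hz).rpow_const
    (p := a * c - 1) (Or.inl one_ne_zero)
  have htail := ((tendsto_stdNormCdf_rpow_atBot (μ := μ) hc hσ).const_sub 1).rpow_const
    (p := b - 1) (Or.inl (by norm_num))
  have hsurv := (tendsto_mcNCdf_atBot (μ := μ) ha hb hc hσ).const_sub 1
  have hlim := (hmills.mul htail).div hsurv (by norm_num)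
  simp only [one_rpow, sub_zero, mul_one, div_one] at hlim
  refine hlim.congr' ?_
  filter_upwards [hz.eventually (eventually_lt_atBot 0)] with x hx
  simp only [Pi.div_apply, Function.comp_apply, mcNHazard, mcNPdf]
  set z := (x - μ) / σ
  have hB := betaFn_pos ha hb
  have hφ := gaussPdf_pos z
  have hz' : 0 < -z := neg_pos.2 hx
  have hA : c / (σ * betaFn a b) * (-z) ^ (1 - a * c) * gaussPdf z ^ (a * c) ≠ 0 := by
    positivity
  rw [mul_assoc _ (gaussPdf z), gaussPdf_mul_stdNormCdf_rpow_eq hx, mul_comm (betaFn a b),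
    eq_div_iff hA]
  ring
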